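/- arXiv:2004.09220 — 5 statements merged into one kernel-verified Lean document; each statement's English description precedes it below -/
import Mathlib

section
/- Let G be a clique-grid graph with representation f, and let T be a k-Steiner tree for terminal set R that minimizes the number of edges uv ∈ E(T) with f(u) ≠ f(v) among all k-Steiner trees. Then for any cell C = (i,j), every other cell C' contains at most one vertex of T that is a T-neighbor of some vertex of C; consequently, the number of edges of T with exactly one endpoint in cell C is at most 24. -/
open SimpleGraph

variable {V : Type*}

def IsSteinerTree (G : SimpleGraph V) (R : Set V) (T : G.Subgraph) : Prop :=
  T.coe.IsTree ∧ R ⊆ T.verts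

def IsRepresentation (G : SimpleGraph V) (f : V → ℤ × ℤ) : Prop :=
  (∀ u v, u ≠ v → f u = f v → G.Adj u v) ∧
  (∀ u v, G.Adj u v → |(f u).1 - (f v).1| ≤ 2 ∧ |(f u).2 - (f v).2| ≤ 2)

/-- The edges of `T` whose endpoints lie in distinct cells. -/
def interCellEdges (G : SimpleGraph V) (f : V → ℤ × ℤ) (T : G.Subgraph) : Set (Sym2 V) :=
  {e ∈ T.edgeSet | ∃ u v, e = s(u, v) ∧ f u ≠ f v}

/-!
If two edges of `T` joined the same pair of distinct cells, delete one of them, `u₂v₂`: the tree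
falls apart into the side of `u₂` and the side of `v₂`, while the other edge `u₁v₁` survives, so
`u₁` and `v₁` lie on one side. Hence `u₁, u₂` or `v₁, v₂` is a pair of vertices in one cell
(adjacent in `G`, since cells are cliques) on opposite sides, and exchanging `u₂v₂` for that edge
gives a `k`-Steiner tree on the same vertices with one inter-cell edge fewer. So each of the 24
cells within distance 2 of `c` receives at most one edge of `T` leaving `c`.
-/

namespace SimpleGraph

variable {α : Type*} {Γ : SimpleGraph α}

theorem Reachable.deleteEdges_reachable_or {a b v : α} (h : Γ.Reachable v a) :
    (Γ.deleteEdges {s(a, b)}).Reachable v a ∨ (Γ.deleteEdges {s(a, b)}).Reachable v b := by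
  obtain ⟨p⟩ := h
  induction p with
  | nil => exact .inl .rfl
  | @cons u w a huw _ ih =>
    by_cases he : s(u, w) = s(a, b)
    · rcases Sym2.eq_iff.mp he with ⟨rfl, -⟩ | ⟨rfl, -⟩
      · exact .inl .rfl
      · exact .inr .rfl
    · have huw' : (Γ.deleteEdges {s(a, b)}).Adj u w := by simp [huw, he]
      exact ih.imp huw'.reachable.trans huw'.reachable.trans

theorem IsTree.deleteEdges_sup_edge (hΓ : Γ.IsTree) {a b x y : α}
    (hxy : ¬ (Γ.deleteEdges {s(a, b)}).Reachable x y) :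
    (Γ.deleteEdges {s(a, b)} ⊔ edge x y).IsTree := by
  set H := Γ.deleteEdges {s(a, b)}
  have hH : H ≤ H ⊔ edge x y := le_sup_left
  have side (v : α) : H.Reachable v a ∨ H.Reachable v b :=
    (hΓ.connected.preconnected v a).deleteEdges_reachable_or
  have hne : x ≠ y := by rintro rfl; exact hxy .rfl
  have hxy' : (H ⊔ edge x y).Reachable x y := Adj.reachable (by simp [edge_adj, hne])
  have hab : (H ⊔ edge x y).Reachable a b := by
    rcases side x with hx | hx <;> rcases side y with hy | hy
    · exact absurd (hx.trans hy.symm) hxy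
    · exact (hx.mono hH).symm.trans (hxy'.trans (hy.mono hH))
    · exact (hy.mono hH).symm.trans (hxy'.symm.trans (hx.mono hH))
    · exact absurd (hx.trans hy.symm) hxy
  refine ⟨(connected_iff_exists_forall_reachable _).mpr ⟨a, fun v => ?_⟩,
    (hΓ.isAcyclic.anti (deleteEdges_le _)).sup_edge_of_not_reachable hxy⟩
  rcases side v with hv | hv
  · exact (hv.mono hH).symm
  · exact hab.trans (hv.mono hH).symm

end SimpleGraph

namespace SimpleGraph.Subgraph

variable {G : SimpleGraph V}

-- Built by hand rather than from `deleteEdges` and `⊔`, so that the vertex set is `T.verts` on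
-- the nose and `coe` gives a graph on the same type as `T.coe` (see `coe_exchangeEdge`).
def exchangeEdge (T : G.Subgraph) (a b : V) {x y : V} (hxy : G.Adj x y)
    (hx : x ∈ T.verts) (hy : y ∈ T.verts) : G.Subgraph where
  verts := T.verts
  Adj v w := (T.Adj v w ∧ s(v, w) ≠ s(a, b)) ∨ s(v, w) = s(x, y)
  adj_sub := by
    rintro v w (⟨h, -⟩ | h)
    · exact T.adj_sub h
    · rcases Sym2.eq_iff.mp h with ⟨rfl, rfl⟩ | ⟨rfl, rfl⟩
      exacts [hxy, hxy.symm]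
  edge_vert := by
    rintro v w (⟨h, -⟩ | h)
    · exact T.edge_vert h
    · rcases Sym2.eq_iff.mp h with ⟨rfl, rfl⟩ | ⟨rfl, rfl⟩
      exacts [hx, hy]
  symm := by
    constructor
    rintro v w (⟨h, hne⟩ | h)
    · exact .inl ⟨h.symm, by rwa [Sym2.eq_swap]⟩
    · exact .inr (by rwa [Sym2.eq_swap])

variable {T : G.Subgraph} {a b x y : V} (hxy : G.Adj x y) (hx : x ∈ T.verts) (hy : y ∈ T.verts)

theorem coe_exchangeEdge (ha : a ∈ T.verts) (hb : b ∈ T.verts) :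
    (T.exchangeEdge a b hxy hx hy).coe =
      T.coe.deleteEdges {s(⟨a, ha⟩, ⟨b, hb⟩)} ⊔ edge ⟨x, hx⟩ ⟨y, hy⟩ := by
  ext ⟨v, hv⟩ ⟨w, hw⟩
  simp only [exchangeEdge, coe_adj, SimpleGraph.sup_adj, SimpleGraph.deleteEdges_adj,
    SimpleGraph.edge_adj, Set.mem_singleton_iff, Sym2.eq_iff, Subtype.ext_iff, ne_eq]
  have := hxy.ne
  grind

theorem edgeSet_exchangeEdge_subset :
    (T.exchangeEdge a b hxy hx hy).edgeSet ⊆ insert s(x, y) (T.edgeSet \ {s(a, b)}) := by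
  rintro ⟨v, w⟩ (⟨h, hne⟩ | h)
  · exact .inr ⟨h, hne⟩
  · exact .inl h

end SimpleGraph.Subgraph

def IsMinInterCellSteinerTree (G : SimpleGraph V) (f : V → ℤ × ℤ) (R : Set V) (k : ℕ)
    (T : G.Subgraph) : Prop :=
  (IsSteinerTree G R T ∧ (T.verts \ R).ncard ≤ k) ∧
    ∀ T' : G.Subgraph, IsSteinerTree G R T' ∧ (T'.verts \ R).ncard ≤ k →
      (interCellEdges G f T).ncard ≤ (interCellEdges G f T').ncard

namespace IsMinInterCellSteinerTree

variable [Finite V] {G : SimpleGraph V} {f : V → ℤ × ℤ} {R : Set V} {k : ℕ} {T : G.Subgraph}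
  (hT : IsMinInterCellSteinerTree G f R k T) (hf : IsRepresentation G f)
include hT hf

theorem reachable_deleteEdges {a b x y : V} (hab : T.Adj a b) (hfab : f a ≠ f b)
    (hx : x ∈ T.verts) (hy : y ∈ T.verts) (hfxy : f x = f y) :
    (T.coe.deleteEdges {s(⟨a, T.edge_vert hab⟩, ⟨b, T.edge_vert hab.symm⟩)}).Reachable
      ⟨x, hx⟩ ⟨y, hy⟩ := by
  obtain rfl | hne := eq_or_ne x y
  · rfl
  by_contra hnr
  have hxy : G.Adj x y := hf.1 x y hne hfxy
  set T' := T.exchangeEdge a b hxy hx hy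
  have htree : T'.coe.IsTree := by
    rw [Subgraph.coe_exchangeEdge hxy hx hy (T.edge_vert hab) (T.edge_vert hab.symm)]
    exact hT.1.1.1.deleteEdges_sup_edge hnr
  have hsub : interCellEdges G f T' ⊂ interCellEdges G f T := by
    refine Set.ssubset_of_subset_of_ssubset (s₂ := interCellEdges G f T \ {s(a, b)}) ?_
      (Set.sdiff_singleton_ssubset.mpr ⟨(T.mem_edgeSet).mpr hab, a, b, rfl, hfab⟩)
    rintro e ⟨he, u, v, rfl, huv⟩
    rcases Subgraph.edgeSet_exchangeEdge_subset hxy hx hy he with h | ⟨he, hne⟩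
    · rcases Sym2.eq_iff.mp h with ⟨rfl, rfl⟩ | ⟨rfl, rfl⟩
      exacts [absurd hfxy huv, absurd hfxy.symm huv]
    · exact ⟨⟨he, u, v, rfl, huv⟩, hne⟩
  exact (hT.2 T' ⟨⟨htree, hT.1.1.2⟩, hT.1.2⟩).not_gt (Set.ncard_lt_ncard hsub (Set.toFinite _))

theorem edge_eq_of_cell_eq {u₁ v₁ u₂ v₂ : V} (h₁ : T.Adj u₁ v₁) (h₂ : T.Adj u₂ v₂)
    (hu : f u₁ = f u₂) (hv : f v₁ = f v₂) (huv : f u₂ ≠ f v₂) : s(u₁, v₁) = s(u₂, v₂) := by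
  by_contra hne
  have hbridge := isAcyclic_iff_forall_adj_isBridge.mp hT.1.1.1.isAcyclic
    (show T.coe.Adj ⟨u₂, T.edge_vert h₂⟩ ⟨v₂, T.edge_vert h₂.symm⟩ from h₂)
  have h₁' : (T.coe.deleteEdges {s(⟨u₂, T.edge_vert h₂⟩, ⟨v₂, T.edge_vert h₂.symm⟩)}).Adj
      ⟨u₁, T.edge_vert h₁⟩ ⟨v₁, T.edge_vert h₁.symm⟩ := by
    simpa [h₁, Sym2.eq_iff, Subtype.ext_iff] using hne
  exact hbridge ((hT.reachable_deleteEdges hf h₂ huv _ _ hu.symm).trans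
    (h₁'.reachable.trans (hT.reachable_deleteEdges hf h₂ huv _ _ hv)))

theorem ncard_adj_in_cell_le_one {c c' : ℤ × ℤ} (hc : c' ≠ c) :
    {v | f v = c' ∧ ∃ u, f u = c ∧ T.Adj u v}.ncard ≤ 1 := by
  refine (Set.ncard_le_one_iff (Set.toFinite _)).mpr ?_
  rintro v₁ v₂ ⟨rfl, u₁, hu₁, h₁⟩ ⟨hv, u₂, rfl, h₂⟩
  rcases Sym2.eq_iff.mp (hT.edge_eq_of_cell_eq hf h₁ h₂ hu₁ hv.symm (hv ▸ hc.symm))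
    with ⟨-, h⟩ | ⟨-, rfl⟩
  exacts [h, absurd rfl hc]

theorem ncard_edges_between_cells_le_one {c c' : ℤ × ℤ} (hc : c' ≠ c) :
    {e ∈ T.edgeSet | ∃ u v, e = s(u, v) ∧ f u = c ∧ f v = c'}.ncard ≤ 1 := by
  refine (Set.ncard_le_one_iff (Set.toFinite _)).mpr ?_
  rintro _ _ ⟨h₁, u₁, v₁, rfl, rfl, rfl⟩ ⟨h₂, u₂, v₂, rfl, hu, hv⟩
  exact hT.edge_eq_of_cell_eq hf h₁ h₂ hu.symm hv.symm (hu ▸ hv ▸ hc.symm)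

theorem ncard_edges_leaving_cell_le (c : ℤ × ℤ) :
    {e ∈ T.edgeSet | ∃ u v, e = s(u, v) ∧ f u = c ∧ f v ≠ c}.ncard ≤ 24 := by
  set F := (Finset.Icc (c.1 - 2) (c.1 + 2) ×ˢ Finset.Icc (c.2 - 2) (c.2 + 2)).erase c
  have hF : F.card = 24 := by
    rw [Finset.card_erase_of_mem (by simp), Finset.card_product, Int.card_Icc, Int.card_Icc]
    ring_nf; rfl
  have hcover : {e ∈ T.edgeSet | ∃ u v, e = s(u, v) ∧ f u = c ∧ f v ≠ c} ⊆
      ⋃ c' ∈ F, {e ∈ T.edgeSet | ∃ u v, e = s(u, v) ∧ f u = c ∧ f v = c'} := by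
    rintro _ ⟨he, u, v, rfl, rfl, hv⟩
    obtain ⟨h₁, h₂⟩ := hf.2 u v (T.adj_sub he)
    refine Set.mem_biUnion ?_ ⟨he, u, v, rfl, rfl, rfl⟩
    simp only [F, Finset.coe_erase, Set.mem_sdiff, Finset.coe_product, Set.mem_prod,
      Finset.coe_Icc, Set.mem_Icc, Set.mem_singleton_iff, abs_le] at h₁ h₂ ⊢
    refine ⟨⟨⟨?_, ?_⟩, ?_, ?_⟩, hv⟩ <;> linarith
  calc _ ≤ (⋃ c' ∈ F, {e ∈ T.edgeSet | ∃ u v, e = s(u, v) ∧ f u = c ∧ f v = c'}).ncard :=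
        Set.ncard_le_ncard hcover (Set.toFinite _)
    _ ≤ ∑ c' ∈ F, 1 := (F.set_ncard_biUnion_le _).trans (Finset.sum_le_sum fun c' hc' =>
        hT.ncard_edges_between_cells_le_one hf (Finset.ne_of_mem_erase hc'))
    _ = 24 := by simp [hF]

end IsMinInterCellSteinerTree

/-- If `T` is a `k`-Steiner tree minimizing the number of inter-cell edges, then for any cell
`c`: every other cell contains at most one `T`-neighbour of a vertex of `c`, and the number of
edges of `T` with exactly one endpoint in `c` is at most 24. -/
theorem stmt3 [Fintype V] (G : SimpleGraph V) (f : V → ℤ × ℤ) (hf : IsRepresentation G f)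
    (R : Set V) (k : ℕ) (T : G.Subgraph)
    (hT : IsSteinerTree G R T ∧ (T.verts \ R).ncard ≤ k)
    (hmin : ∀ T' : G.Subgraph, IsSteinerTree G R T' ∧ (T'.verts \ R).ncard ≤ k →
      (interCellEdges G f T).ncard ≤ (interCellEdges G f T').ncard)
    (c : ℤ × ℤ) :
    (∀ c' : ℤ × ℤ, c' ≠ c → {v | f v = c' ∧ ∃ u, f u = c ∧ T.Adj u v}.ncard ≤ 1) ∧
    {e ∈ T.edgeSet | ∃ u v, e = s(u, v) ∧ f u = c ∧ f v ≠ c}.ncard ≤ 24 := by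
  have hT' : IsMinInterCellSteinerTree G f R k T := ⟨hT, hmin⟩
  exact ⟨fun _ hc' => hT'.ncard_adj_in_cell_le_one hf hc', hT'.ncard_edges_leaving_cell_le hf c⟩
end

section
/- Let G be a connected graph, R ⊆ V(G), and let T₁, ..., T_q be spanning trees of the connected components C₁, ..., C_q of G[R]. If G admits a k-Steiner tree for R, then G admits a k-Steiner tree T for R such that every Tᵢ is a subtree of T. -/
open SimpleGraph

variable {V : Type*}

/-!
The trees `Tᵢ` live inside `R`, hence inside the vertex set of any Steiner tree `T₀`, and they are
vertex-disjoint, so their union is a forest in the connected graph `T₀ ∪ ⋃ Tᵢ`, whose vertex set is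
that of `T₀`. Extending this forest to a spanning tree of `T₀ ∪ ⋃ Tᵢ` yields a Steiner tree with
the same vertices as `T₀`, hence with the same number of non-terminals, that contains every `Tᵢ`.
-/

namespace SimpleGraph

lemma IsAcyclic.spanningCoe {s : Set V} {H : SimpleGraph s} (h : H.IsAcyclic) :
    H.spanningCoe.IsAcyclic := by
  intro v c hc
  have hs : ∀ x ∈ c.support, x ∈ s := fun x hx => by
    obtain ⟨x', -, rfl⟩ := (support_spanningCoe H).subset
      (mem_support_of_mem_walk_support c hc.not_nil hx)
    exact x'.2
  have h' : (H.spanningCoe.induce s).IsAcyclic := induce_spanningCoe ▸ h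
  exact h' (c.induce s hs) (.of_map (f := (Embedding.induce s).toHom) (by rwa [Walk.map_induce]))

lemma isAcyclic_iSup_of_pairwise_disjoint_support {ι : Type*} {H : ι → SimpleGraph V}
    (hdisj : Pairwise fun i j => Disjoint (H i).support (H j).support)
    (hH : ∀ i, (H i).IsAcyclic) : (⨆ i, H i).IsAcyclic := by
  have hedges : ∀ {u w : V} (p : (⨆ i, H i).Walk u w) (i : ι), u ∈ (H i).support →
      ∀ e ∈ p.edges, e ∈ (H i).edgeSet := by
    intro u w p
    induction p with
    | nil => simp
    | @cons u z w h p ih =>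
      intro i hu e he
      obtain ⟨j, hj⟩ := iSup_adj.mp h
      obtain rfl : j = i := hdisj.eq (Set.not_disjoint_iff.mpr ⟨u, hj.mem_support_left, hu⟩)
      rw [Walk.edges_cons, List.mem_cons] at he
      rcases he with rfl | he
      · exact hj
      · exact ih j hj.mem_support_right e he
  intro v c hc
  cases c with
  | nil => exact hc.not_nil Walk.Nil.nil
  | cons h p =>
    obtain ⟨i, hi⟩ := iSup_adj.mp h
    exact hH i _ (hc.transfer (hedges (.cons h p) i hi.mem_support_left))

namespace Subgraph

variable {G : SimpleGraph V}

lemma spanningCoe_iSup {ι : Type*} (f : ι → G.Subgraph) :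
    (⨆ i, f i).spanningCoe = ⨆ i, (f i).spanningCoe := by
  ext
  simp [iSup_adj]

abbrev ofLECoe (H : G.Subgraph) (S : SimpleGraph H.verts) (hS : S ≤ H.coe) : G.Subgraph where
  verts := H.verts
  Adj x y := ∃ (hx : x ∈ H.verts) (hy : y ∈ H.verts), S.Adj ⟨x, hx⟩ ⟨y, hy⟩
  adj_sub := fun ⟨_, _, h⟩ => H.adj_sub (hS h)
  edge_vert := fun ⟨hx, _, _⟩ => hx
  symm := ⟨fun _ _ ⟨hx, hy, h⟩ => ⟨hy, hx, h.symm⟩⟩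

lemma coe_ofLECoe (H : G.Subgraph) (S : SimpleGraph H.verts) (hS : S ≤ H.coe) :
    (H.ofLECoe S hS).coe = S := by
  ext ⟨x, hx⟩ ⟨y, hy⟩
  exact ⟨fun ⟨_, _, h⟩ => h, fun h => ⟨hx, hy, h⟩⟩

theorem Connected.exists_isTree_le_of_le_of_isAcyclic {H F : G.Subgraph} (hH : H.Connected)
    (hFH : F ≤ H) (hF : F.spanningCoe.IsAcyclic) :
    ∃ T : G.Subgraph, F ≤ T ∧ T.verts = H.verts ∧ T.coe.IsTree := by
  let A : SimpleGraph H.verts := F.spanningCoe.comap (Function.Embedding.subtype _)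
  have hAH : A ≤ H.coe := fun _ _ h => hFH.2 h
  obtain ⟨S, hAS, hSH, hS⟩ := hH.coe.exists_isTree_le_of_le_of_isAcyclic hAH (hF.of_comap _)
  refine ⟨H.ofLECoe S hSH, ⟨hFH.1, fun x y h => ?_⟩, rfl, by rwa [coe_ofLECoe]⟩
  exact ⟨hFH.1 h.fst_mem, hFH.1 h.snd_mem, hAS h⟩

end Subgraph

end SimpleGraph

theorem stmt5_general (G : SimpleGraph V) (R : Set V) (k q : ℕ)
    (T : Fin q → G.Subgraph) (comp : Fin q → (G.induce R).ConnectedComponent)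
    (hbij : Function.Bijective comp)
    (htree : ∀ i, (T i).coe.IsTree)
    (hverts : ∀ i, (T i).verts = Subtype.val '' (comp i).supp)
    (hex : ∃ T₀ : G.Subgraph, IsSteinerTree G R T₀ ∧ (T₀.verts \ R).ncard ≤ k) :
    ∃ T' : G.Subgraph, IsSteinerTree G R T' ∧ (T'.verts \ R).ncard ≤ k ∧ ∀ i, T i ≤ T' := by
  obtain ⟨T₀, ⟨hT₀, hRT₀⟩, hk⟩ := hex
  have hTR : ∀ i, (T i).verts ⊆ R := fun i => hverts i ▸ Subtype.coe_image_subset R _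
  have hdisj : Pairwise fun i j => Disjoint (T i).verts (T j).verts := fun i j hij => by
    dsimp only
    rw [hverts, hverts, Set.disjoint_image_iff Subtype.val_injective]
    exact pairwise_disjoint_supp_connectedComponent _ (hbij.injective.ne hij)
  have hforest : (⨆ i, T i).spanningCoe.IsAcyclic := by
    rw [Subgraph.spanningCoe_iSup]
    refine isAcyclic_iSup_of_pairwise_disjoint_support (fun i j hij => ?_)
      fun i => Subgraph.spanningCoe_coe (T i) ▸ (htree i).isAcyclic.spanningCoe
    exact (hdisj hij).mono (fun _ ⟨_, h⟩ => h.fst_mem) (fun _ ⟨_, h⟩ => h.fst_mem)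
  have hverts_sup : (T₀ ⊔ ⨆ i, T i).verts = T₀.verts := by
    simpa [Subgraph.verts_iSup] using fun i => (hTR i).trans hRT₀
  have hconn : (T₀ ⊔ ⨆ i, T i).Connected :=
    (Subgraph.connected_iff'.mpr hT₀.connected).mono le_sup_left hverts_sup.symm
  obtain ⟨T', hle, hT'verts, hT'⟩ := hconn.exists_isTree_le_of_le_of_isAcyclic le_sup_right hforest
  rw [hverts_sup] at hT'verts
  exact ⟨T', ⟨hT', hT'verts ▸ hRT₀⟩, hT'verts ▸ hk, fun i => (le_iSup T i).trans hle⟩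

/-- Let `T i` (for `i : Fin q`) be spanning trees of the `q` connected components of `G[R]`.
If `G` admits a `k`-Steiner tree for `R`, then it admits one containing every `T i` as a
subtree. -/
theorem stmt5 [Fintype V] (G : SimpleGraph V) (hG : G.Connected) (R : Set V) (k q : ℕ)
    (T : Fin q → G.Subgraph) (comp : Fin q → (G.induce R).ConnectedComponent)
    (hbij : Function.Bijective comp)
    (htree : ∀ i, (T i).coe.IsTree)
    (hverts : ∀ i, (T i).verts = Subtype.val '' (comp i).supp)
    (hex : ∃ T₀ : G.Subgraph, IsSteinerTree G R T₀ ∧ (T₀.verts \ R).ncard ≤ k) :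
    ∃ T' : G.Subgraph, IsSteinerTree G R T' ∧ (T'.verts \ R).ncard ≤ k ∧ ∀ i, T i ≤ T' :=
  stmt5_general G R k q T comp hbij htree hverts hex
end

section
/- Let G be a connected graph whose vertex set is partitioned into terminals R and non-terminals, and let G* be the component contracted graph obtained by contracting each connected component of G[R] to a single terminal vertex. Then G has a Steiner tree for R with at most k Steiner vertices if and only if G* has a Steiner tree for the contracted terminal set R* with at most k Steiner vertices. -/
open SimpleGraph

variable {V : Type*}

/-- The component contracted graph of `G` w.r.t. terminal set `R`: each connected component of
`G[R]` is contracted to a single (terminal) vertex; non-terminals keep their adjacencies, and a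
non-terminal is adjacent to a contracted component iff it has a neighbour in that component. -/
def contractedGraph (G : SimpleGraph V) (R : Set V) :
    SimpleGraph ({v : V // v ∉ R} ⊕ (G.induce R).ConnectedComponent) where
  Adj x y :=
    match x, y with
    | Sum.inl v, Sum.inl w => G.Adj v.val w.val
    | Sum.inl v, Sum.inr c => ∃ u ∈ c.supp, G.Adj v.val u.val
    | Sum.inr c, Sum.inl v => ∃ u ∈ c.supp, G.Adj v.val u.val
    | Sum.inr _, Sum.inr _ => False
  symm := by
    constructor
    rintro (v | c) (w | d) h
    · exact h.symm
    · exact h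
    · exact h
    · exact h
  loopless := by
    constructor
    rintro (v | c) h
    · exact G.ne_of_adj h rfl
    · exact h

/-!
The projection `π = contractedGraphProj G R : V → V*` fixes the non-terminals and sends a terminal
to its component of `G[R]`. It is a bijection between the non-terminals of `G` and of `G*`, it
maps every edge of `G` to an edge or to a single vertex, every edge of `G*` lifts to an edge of
`G`, and its fibres (a point, or a component of `G[R]`) are connected. Hence `π` maps the vertex
set of a Steiner tree of `G` onto a connected vertex set of `G*` containing `R*`, and pulls the
vertex set of a Steiner tree of `G*` back to a connected vertex set of `G` containing `R`, without
changing the number of non-terminals. A spanning tree of the induced subgraph is then the required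
Steiner tree.
-/

namespace SimpleGraph

variable {W : Type*} {G : SimpleGraph V} {G' : SimpleGraph W}

theorem Subgraph.Connected.exists_isTree_le {H : G.Subgraph} (hH : H.Connected) :
    ∃ T ≤ H, T.verts = H.verts ∧ T.coe.IsTree := by
  obtain ⟨S, hSH, hS⟩ := hH.coe.exists_isTree_le
  let T : G.Subgraph :=
    { verts := H.verts
      Adj := fun a b => ∃ (ha : a ∈ H.verts) (hb : b ∈ H.verts), S.Adj ⟨a, ha⟩ ⟨b, hb⟩
      adj_sub := fun ⟨_, _, h⟩ => H.adj_sub (hSH h)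
      edge_vert := fun ⟨ha, _, _⟩ => ha
      symm := ⟨fun _ _ ⟨ha, hb, h⟩ => ⟨hb, ha, h.symm⟩⟩ }
  have hTS : T.coe = S := by
    ext a b
    exact ⟨fun ⟨_, _, h⟩ => h, fun h => ⟨a.2, b.2, h⟩⟩
  exact ⟨T, ⟨subset_rfl, fun _ _ ⟨_, _, h⟩ => hSH h⟩, rfl, hTS ▸ hS⟩

theorem Connected.induce_image {f : V → W}
    (hf : ∀ ⦃a b⦄, G.Adj a b → f a ≠ f b → G'.Adj (f a) (f b)) {s : Set V}
    (hs : (G.induce s).Connected) : (G'.induce (f '' s)).Connected := by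
  have hwalk : ∀ (a b : s) (_ : (G.induce s).Walk a b),
      (G'.induce (f '' s)).Reachable ⟨f a, a, a.2, rfl⟩ ⟨f b, b, b.2, rfl⟩ := by
    intro a b p
    induction p with
    | nil => rfl
    | @cons a c b hac _ ih =>
      refine Reachable.trans ?_ ih
      by_cases hfac : f a = f c
      · rw [show (⟨f a, a, a.2, rfl⟩ : f '' s) = ⟨f c, c, c.2, rfl⟩ from Subtype.ext hfac]
      · exact Adj.reachable (hf hac hfac)
  obtain ⟨a⟩ := hs.nonempty
  refine (connected_iff_exists_forall_reachable _).mpr ⟨⟨f a, a, a.2, rfl⟩, ?_⟩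
  rintro ⟨_, b, hb, rfl⟩
  obtain ⟨p⟩ := hs.preconnected a ⟨b, hb⟩
  exact hwalk a ⟨b, hb⟩ p

theorem Connected.induce_preimage {f : V → W} {s : Set W} (hs : (G'.induce s).Connected)
    (hfiber : ∀ w ∈ s, (G.induce (f ⁻¹' {w})).Connected)
    (hlift : ∀ ⦃x y⦄, G'.Adj x y → ∃ a b, f a = x ∧ f b = y ∧ G.Adj a b) :
    (G.induce (f ⁻¹' s)).Connected := by
  have hsame : ∀ a b : f ⁻¹' s, f a = f b → (G.induce (f ⁻¹' s)).Reachable a b := by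
    rintro ⟨a, ha⟩ ⟨b, hb⟩ hab
    have hsub : f ⁻¹' {f a} ⊆ f ⁻¹' s := fun c (hc : f c = f a) => show f c ∈ s from hc ▸ ha
    exact ((hfiber _ ha).preconnected ⟨a, rfl⟩ ⟨b, hab.symm⟩).map (induceHomOfLE _ hsub).toHom
  have hwalk : ∀ (x y : s) (_ : (G'.induce s).Walk x y) (a b : f ⁻¹' s), f a = x → f b = y →
      (G.induce (f ⁻¹' s)).Reachable a b := by
    intro x y p
    induction p with
    | nil => exact fun a b ha hb => hsame a b (ha.trans hb.symm)
    | @cons x z y hxz _ ih =>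
      intro a b ha hb
      obtain ⟨c, d, hc, hd, hcd⟩ := hlift hxz
      let c' : f ⁻¹' s := ⟨c, show f c ∈ s from hc ▸ x.2⟩
      let d' : f ⁻¹' s := ⟨d, show f d ∈ s from hd ▸ z.2⟩
      have hcd' : (G.induce (f ⁻¹' s)).Adj c' d' := hcd
      exact ((hsame a c' (ha.trans hc.symm)).trans hcd'.reachable).trans (ih d' b hd hb)
  obtain ⟨x⟩ := hs.nonempty
  obtain ⟨⟨a, ha⟩⟩ := (hfiber x x.2).nonempty
  refine (connected_iff_exists_forall_reachable _).mpr
    ⟨⟨a, show f a ∈ s from (ha : f a = x) ▸ x.2⟩, fun b => ?_⟩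
  obtain ⟨p⟩ := hs.preconnected x ⟨f b, b.2⟩
  exact hwalk x ⟨f b, b.2⟩ p _ b ha rfl

end SimpleGraph

section SteinerTree

variable {G : SimpleGraph V}

theorem exists_isSteinerTree_of_connected_induce {R S : Set V} (hS : (G.induce S).Connected)
    (hRS : R ⊆ S) : ∃ T : G.Subgraph, IsSteinerTree G R T ∧ T.verts = S := by
  obtain ⟨T, -, hverts, hT⟩ := (connected_induce_iff.mp hS).exists_isTree_le
  exact ⟨T, ⟨hT, hverts ▸ hRS⟩, hverts⟩

theorem IsSteinerTree.connected_induce_verts {R : Set V} {T : G.Subgraph}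
    (hT : IsSteinerTree G R T) : (G.induce T.verts).Connected :=
  (Subgraph.connected_iff'.mpr hT.1.connected).induce_verts

end SteinerTree

section Contraction

variable {G : SimpleGraph V} {R : Set V}

open Classical in
noncomputable def contractedGraphProj (G : SimpleGraph V) (R : Set V) (v : V) :
    {v : V // v ∉ R} ⊕ (G.induce R).ConnectedComponent :=
  if h : v ∈ R then Sum.inr ((G.induce R).connectedComponentMk ⟨v, h⟩) else Sum.inl ⟨v, h⟩

theorem contractedGraphProj_of_mem {v : V} (h : v ∈ R) :
    contractedGraphProj G R v = Sum.inr ((G.induce R).connectedComponentMk ⟨v, h⟩) := dif_pos h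

theorem contractedGraphProj_of_notMem {v : V} (h : v ∉ R) :
    contractedGraphProj G R v = Sum.inl ⟨v, h⟩ := dif_neg h

theorem contractedGraphProj_mem_range_inr_iff {v : V} :
    contractedGraphProj G R v ∈ Set.range Sum.inr ↔ v ∈ R := by
  by_cases h : v ∈ R <;>
    simp [h, contractedGraphProj_of_mem, contractedGraphProj_of_notMem]

theorem contractedGraphProj_surjective : (contractedGraphProj G R).Surjective := by
  rintro (v | c)
  · exact ⟨v, contractedGraphProj_of_notMem v.2⟩
  · obtain ⟨u, rfl⟩ := c.exists_rep
    exact ⟨u, contractedGraphProj_of_mem u.2⟩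

theorem injOn_contractedGraphProj : Set.InjOn (contractedGraphProj G R) Rᶜ := by
  intro a ha b hb hab
  rw [contractedGraphProj_of_notMem ha, contractedGraphProj_of_notMem hb] at hab
  simpa using hab

theorem ncard_image_contractedGraphProj_diff (S : Set V) :
    (contractedGraphProj G R '' S \ Set.range Sum.inr).ncard = (S \ R).ncard := by
  have : contractedGraphProj G R '' S \ Set.range Sum.inr = contractedGraphProj G R '' (S \ R) := by
    ext x
    simp only [Set.mem_sdiff, Set.mem_image]
    constructor
    · rintro ⟨⟨a, ha, rfl⟩, hx⟩
      exact ⟨a, ⟨ha, mt contractedGraphProj_mem_range_inr_iff.mpr hx⟩, rfl⟩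
    · rintro ⟨a, ⟨ha, haR⟩, rfl⟩
      exact ⟨⟨a, ha, rfl⟩, mt contractedGraphProj_mem_range_inr_iff.mp haR⟩
  rw [this, (injOn_contractedGraphProj.mono (Set.sdiff_subset_compl _ _)).ncard_image]

theorem contractedGraph_adj_contractedGraphProj ⦃a b : V⦄ (hab : G.Adj a b)
    (hne : contractedGraphProj G R a ≠ contractedGraphProj G R b) :
    (contractedGraph G R).Adj (contractedGraphProj G R a) (contractedGraphProj G R b) := by
  by_cases ha : a ∈ R <;> by_cases hb : b ∈ R
  · refine absurd ?_ hne
    rw [contractedGraphProj_of_mem ha, contractedGraphProj_of_mem hb,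
      ConnectedComponent.eq.mpr (show (G.induce R).Adj ⟨a, ha⟩ ⟨b, hb⟩ from hab).reachable]
  · rw [contractedGraphProj_of_mem ha, contractedGraphProj_of_notMem hb]
    exact ⟨⟨a, ha⟩, rfl, hab.symm⟩
  · rw [contractedGraphProj_of_notMem ha, contractedGraphProj_of_mem hb]
    exact ⟨⟨b, hb⟩, rfl, hab⟩
  · rw [contractedGraphProj_of_notMem ha, contractedGraphProj_of_notMem hb]
    exact hab

theorem exists_adj_of_contractedGraph_adj ⦃x y⦄ (hxy : (contractedGraph G R).Adj x y) :
    ∃ a b, contractedGraphProj G R a = x ∧ contractedGraphProj G R b = y ∧ G.Adj a b := by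
  rcases x with v | c <;> rcases y with w | d
  · exact ⟨v, w, contractedGraphProj_of_notMem v.2, contractedGraphProj_of_notMem w.2, hxy⟩
  · obtain ⟨u, rfl, hvu⟩ := hxy
    exact ⟨v, u, contractedGraphProj_of_notMem v.2, contractedGraphProj_of_mem u.2, hvu⟩
  · obtain ⟨u, rfl, hwu⟩ := hxy
    exact ⟨u, w, contractedGraphProj_of_mem u.2, contractedGraphProj_of_notMem w.2, hwu.symm⟩
  · exact hxy.elim

theorem connected_induce_contractedGraphProj_fiber (x) :
    (G.induce (contractedGraphProj G R ⁻¹' {x})).Connected := by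
  rcases x with v | c
  · have : contractedGraphProj G R ⁻¹' {Sum.inl v} = {v.val} := by
      ext a
      by_cases ha : a ∈ R
      · simp only [Set.mem_preimage, contractedGraphProj_of_mem ha, Set.mem_singleton_iff,
          reduceCtorEq, false_iff]
        exact fun hav => v.2 (hav ▸ ha)
      · simp [contractedGraphProj_of_notMem ha, Subtype.ext_iff]
    rw [this, induce_singleton_eq_top]
    exact connected_top
  · have : contractedGraphProj G R ⁻¹' {Sum.inr c} = Subtype.val '' c.supp := by
      ext a
      by_cases ha : a ∈ R
      · simp [ha, contractedGraphProj_of_mem]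
      · simp [ha, contractedGraphProj_of_notMem]
    rw [this]
    exact c.connected_toSimpleGraph.induce_image (f := Subtype.val) (G' := G) fun a b hab _ => hab

end Contraction

theorem stmt7_general (G : SimpleGraph V) (R : Set V) (k : ℕ) :
    (∃ T : G.Subgraph, IsSteinerTree G R T ∧ (T.verts \ R).ncard ≤ k) ↔
    (∃ T' : (contractedGraph G R).Subgraph,
      IsSteinerTree (contractedGraph G R) (Set.range Sum.inr) T' ∧
      (T'.verts \ Set.range Sum.inr).ncard ≤ k) := by
  constructor
  · rintro ⟨T, hT, hk⟩
    have hconn := hT.connected_induce_verts.induce_image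
      (contractedGraph_adj_contractedGraphProj (R := R))
    have hterm : Set.range Sum.inr ⊆ contractedGraphProj G R '' T.verts := by
      rintro _ ⟨c, rfl⟩
      obtain ⟨u, rfl⟩ := c.exists_rep
      exact ⟨u, hT.2 u.2, contractedGraphProj_of_mem u.2⟩
    obtain ⟨T', hT', hverts⟩ := exists_isSteinerTree_of_connected_induce hconn hterm
    exact ⟨T', hT', by rwa [hverts, ncard_image_contractedGraphProj_diff]⟩
  · rintro ⟨T', hT', hk⟩
    have hconn := hT'.connected_induce_verts.induce_preimage
      (fun x _ => connected_induce_contractedGraphProj_fiber x) exists_adj_of_contractedGraph_adj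
    have hterm : R ⊆ contractedGraphProj G R ⁻¹' T'.verts :=
      fun _ hv => hT'.2 (contractedGraphProj_mem_range_inr_iff.mpr hv)
    obtain ⟨T, hT, hverts⟩ := exists_isSteinerTree_of_connected_induce hconn hterm
    refine ⟨T, hT, ?_⟩
    rwa [hverts, ← ncard_image_contractedGraphProj_diff,
      Set.image_preimage_eq _ contractedGraphProj_surjective]

/-- `G` has a Steiner tree for `R` with at most `k` Steiner vertices iff the component
contracted graph `G*` has a Steiner tree for the contracted terminal set `R*` with at most `k`
Steiner vertices. -/
theorem stmt7 (G : SimpleGraph V) (hG : G.Connected) (R : Set V) (k : ℕ) :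
    (∃ T : G.Subgraph, IsSteinerTree G R T ∧ (T.verts \ R).ncard ≤ k) ↔
    (∃ T' : (contractedGraph G R).Subgraph,
      IsSteinerTree (contractedGraph G R) (Set.range Sum.inr) T' ∧
      (T'.verts \ Set.range Sum.inr).ncard ≤ k) :=
  stmt7_general G R k
end

section
/- Let G be a clique-grid graph with representation f : V(G) → [p] × [p'] such that at most c columns are nonempty (i.e., f(v) has second coordinate in a set of size c for all v, say j ∈ [c]). Define bags X_i = f⁻¹(i,·) ∪ f⁻¹(i+1,·) ∪ f⁻¹(i+2,·) for i ∈ [p-2], where f⁻¹(i,·) = ⋃_j f⁻¹(i,j). Then the sequence X₁, X₂, ..., X_{p-2} is a path decomposition of G, and each bag is a union of at most 3c cells. -/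
open SimpleGraph

variable {V : Type*} {W : Type*}

/-- A path decomposition given as a finite sequence of bags: every vertex is in some bag, every
edge has both endpoints in a common bag, and the bags containing a fixed vertex form an
interval of indices. -/
def IsPathDecomp (G : SimpleGraph W) {q : ℕ} (B : Fin q → Set W) : Prop :=
  (∀ v, ∃ i, v ∈ B i) ∧
  (∀ u v, G.Adj u v → ∃ i, u ∈ B i ∧ v ∈ B i) ∧
  (∀ v : W, ∀ i j k : Fin q, i ≤ j → j ≤ k → v ∈ B i → v ∈ B k → v ∈ B j)

/-- For a clique-grid graph whose rows lie in `[1,p]` and with at most `c` nonempty columns,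
the bags `Xᵢ = f⁻¹(i+1,·) ∪ f⁻¹(i+2,·) ∪ f⁻¹(i+3,·)` (for `i = 0, …, p-3`) form a path
decomposition of `G`, and each bag is a union of at most `3c` cells. -/
theorem stmt11 (G : SimpleGraph V) (f : V → ℤ × ℤ) (hf : IsRepresentation G f)
    (p c : ℕ) (hp : 3 ≤ p)
    (hrow : ∀ v, (f v).1 ∈ Finset.Icc (1 : ℤ) (p : ℤ))
    (cols : Finset ℤ) (hc : cols.card ≤ c) (hcol : ∀ v, (f v).2 ∈ cols) :
    IsPathDecomp G (fun i : Fin (p - 2) =>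
      {v | (f v).1 = (i : ℤ) + 1 ∨ (f v).1 = (i : ℤ) + 2 ∨ (f v).1 = (i : ℤ) + 3}) ∧
    ∀ i : Fin (p - 2),
      {cell : ℤ × ℤ | ∃ v, f v = cell ∧
        ((f v).1 = (i : ℤ) + 1 ∨ (f v).1 = (i : ℤ) + 2 ∨ (f v).1 = (i : ℤ) + 3)}.ncard
        ≤ 3 * c := by
  obtain ⟨hcl, hadj⟩ := hf
  constructor
  · refine ⟨?_, ?_, ?_⟩
    · intro v
      have h := hrow v
      simp only [Finset.mem_Icc] at h
      refine ⟨⟨min ((f v).1.toNat - 1) (p - 3), by omega⟩, ?_⟩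
      simp only [Set.mem_setOf_eq, Fin.val_mk]
      push_cast
      omega
    · intro u v huv
      have h1 := hrow u; have h2 := hrow v
      have h3 := (hadj u v huv).1
      rw [abs_le] at h3
      simp only [Finset.mem_Icc] at h1 h2
      refine ⟨⟨min ((min (f u).1 (f v).1).toNat - 1) (p-3), by omega⟩, ?_, ?_⟩ <;>
      · simp only [Set.mem_setOf_eq, Fin.val_mk]; push_cast; omega
    · intro v i j k hij hjk hi hk
      simp only [Set.mem_setOf_eq] at *
      have h1 : (i:ℕ) ≤ (j:ℕ) := hij
      have h2 : (j:ℕ) ≤ (k:ℕ) := hjk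
      omega
  · intro i
    have hsub : {cell : ℤ × ℤ | ∃ v, f v = cell ∧
        ((f v).1 = (i : ℤ) + 1 ∨ (f v).1 = (i : ℤ) + 2 ∨ (f v).1 = (i : ℤ) + 3)} ⊆
        ↑(({(i:ℤ)+1, (i:ℤ)+2, (i:ℤ)+3} : Finset ℤ) ×ˢ cols) := by
      rintro ⟨a, b⟩ ⟨v, hv, hr⟩
      rw [hv] at hr
      have hb := hcol v
      rw [hv] at hb
      simp only [Finset.coe_product, Set.mem_prod, Finset.mem_coe, Finset.mem_insert,
        Finset.mem_singleton]
      exact ⟨hr, hb⟩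
    calc _ ≤ (↑(({(i:ℤ)+1, (i:ℤ)+2, (i:ℤ)+3} : Finset ℤ) ×ˢ cols) : Set (ℤ×ℤ)).ncard :=
          Set.ncard_le_ncard hsub (Finset.finite_toSet _)
      _ = (({(i:ℤ)+1, (i:ℤ)+2, (i:ℤ)+3} : Finset ℤ) ×ˢ cols).card := Set.ncard_coe_finset _
      _ ≤ 3 * c := by
          rw [Finset.card_product]
          have : ({(i:ℤ)+1, (i:ℤ)+2, (i:ℤ)+3} : Finset ℤ).card ≤ 3 :=
            (Finset.card_insert_le _ _).trans (by simp [Finset.card_insert_le])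
          calc _ ≤ 3 * cols.card := Nat.mul_le_mul this le_rfl
            _ ≤ 3 * c := Nat.mul_le_mul_left _ hc
end

section
/- Let G be a connected graph, R ⊆ V(G), and suppose T is a subtree of G containing R with Steiner vertex set S = V(T) \ R. If some vertex v ∈ S belongs to a clique K ⊆ V(T) such that all T-neighbors of v lie in K and |K| ≥ 2, then G[V(T) \ {v}] is connected and contains R; hence there is a Steiner tree for R with strictly fewer Steiner vertices. -/
open SimpleGraph

variable {V : Type*}

/-!
A path of `T` from `v` to another vertex `u` leaves `v` through a `T`-neighbour of `v` and then
avoids `v`, so in `G[V(T) \ {v}]` every vertex reaches a neighbour of `v`. These neighbours lie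
in the clique `K`, hence are pairwise adjacent, and the induced graph is connected. A spanning
tree of it is a Steiner tree for `R` without the Steiner vertex `v`.
-/

namespace SimpleGraph

variable {G : SimpleGraph V}

namespace Subgraph

variable {T : G.Subgraph} {u v : V}

lemma Preconnected.exists_walk_from_neighbor (hT : T.Preconnected) (hv : v ∈ T.verts)
    (hu : u ∈ T.verts) (huv : u ≠ v) :
    ∃ w ∈ T.neighborSet v, ∃ p : G.Walk w u, ∀ x ∈ p.support, x ∈ T.verts \ {v} := by
  classical
  obtain ⟨p, hpT⟩ := (preconnected_iff_forall_exists_walk_subgraph T).1 hT hv hu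
  have hqT : p.bypass.toSubgraph ≤ T := Walk.toSubgraph_bypass_le_toSubgraph.trans hpT
  have hq : p.bypass.IsPath := p.bypass_isPath
  generalize p.bypass = q at hqT hq
  cases q with
  | nil => exact absurd rfl huv
  | @cons _ w _ hvw q =>
    rw [Walk.cons_isPath_iff] at hq
    rw [Walk.toSubgraph, sup_le_iff, subgraphOfAdj_le_iff] at hqT
    refine ⟨w, hqT.1, q, fun x hx => ⟨?_, ?_⟩⟩
    · exact hqT.2.1 (q.mem_verts_toSubgraph.2 hx)
    · rintro rfl
      exact hq.2 hx

lemma Preconnected.induce_verts_diff_singleton (hT : T.Preconnected) (hv : v ∈ T.verts)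
    (hclique : G.IsClique (T.neighborSet v)) :
    (G.induce (T.verts \ {v})).Preconnected := by
  have reach_neighbor (a : V) (ha : a ∈ T.verts \ {v}) :
      ∃ w ∈ T.neighborSet v, ∃ hw : w ∈ T.verts \ {v},
        (G.induce (T.verts \ {v})).Reachable ⟨w, hw⟩ ⟨a, ha⟩ := by
    obtain ⟨w, hw, p, hp⟩ := hT.exists_walk_from_neighbor hv ha.1 ha.2
    exact ⟨w, hw, hp w p.start_mem_support, (p.induce _ hp).reachable⟩
  rintro ⟨a, ha⟩ ⟨b, hb⟩
  obtain ⟨wa, hwa, hwa', hpa⟩ := reach_neighbor a ha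
  obtain ⟨wb, hwb, hwb', hpb⟩ := reach_neighbor b hb
  have hab : (G.induce (T.verts \ {v})).Reachable ⟨wa, hwa'⟩ ⟨wb, hwb'⟩ := by
    obtain rfl | hne := eq_or_ne wa wb
    · rfl
    · exact Adj.reachable (SimpleGraph.induce_adj.2 (hclique hwa hwb hne))
  exact hpa.symm.trans (hab.trans hpb)

end Subgraph

lemma Connected.exists_subgraph_isTree_verts_eq {s : Set V} (h : (G.induce s).Connected) :
    ∃ T : G.Subgraph, T.coe.IsTree ∧ T.verts = s := by
  obtain ⟨H, hle, hH⟩ := h.exists_isTree_le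
  let f : Copy H G := (Copy.induce G s).comp (Copy.ofLE H _ hle)
  refine ⟨f.toSubgraph, (Iso.isTree_iff f.isoToSubgraph).1 hH, ?_⟩
  simp only [f, Copy.toSubgraph, Subgraph.map_verts, Subgraph.verts_top, Set.image_univ]
  exact Subtype.range_coe

end SimpleGraph

theorem stmt14_general [Fintype V] (G : SimpleGraph V) (R : Set V) (T : G.Subgraph)
    (hT : IsSteinerTree G R T) (v : V) (hv : v ∈ T.verts) (hvR : v ∉ R)
    (K : Set V) (hK : G.IsClique K) (hKT : K ⊆ T.verts) (hK2 : 2 ≤ K.ncard)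
    (hnb : ∀ w, T.Adj v w → w ∈ K \ {v}) :
    (G.induce (T.verts \ {v})).Connected ∧ R ⊆ T.verts \ {v} ∧
      ∃ T' : G.Subgraph, IsSteinerTree G R T' ∧ (T'.verts \ R).ncard < (T.verts \ R).ncard := by
  obtain ⟨k, hkK, hkv⟩ := Set.exists_ne_of_one_lt_ncard (show 1 < K.ncard by omega) v
  have hRs : R ⊆ T.verts \ {v} := Set.subset_sdiff_singleton hT.2 hvR
  have hconn : (G.induce (T.verts \ {v})).Connected := by
    have hpre : T.Preconnected := ⟨hT.1.connected.preconnected⟩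
    have : Nonempty ↥(T.verts \ {v}) := ⟨⟨k, hKT hkK, hkv⟩⟩
    exact ⟨hpre.induce_verts_diff_singleton hv (hK.subset fun w hw => (hnb w hw).1)⟩
  obtain ⟨T', hT', hverts⟩ := hconn.exists_subgraph_isTree_verts_eq
  refine ⟨hconn, hRs, T', ⟨hT', hverts ▸ hRs⟩, Set.ncard_lt_ncard ?_ (Set.toFinite _)⟩
  rw [hverts, Set.sdiff_sdiff_comm]
  exact Set.sdiff_singleton_ssubset.2 ⟨hv, hvR⟩

/-- If a Steiner tree `T` for `R` has a Steiner vertex `v` lying in a clique `K ⊆ V(T)` of size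
at least 2 such that all `T`-neighbours of `v` lie in `K`, then `G[V(T) \ {v}]` is connected and
contains `R`; hence there is a Steiner tree for `R` with strictly fewer Steiner vertices. -/
theorem stmt14 [Fintype V] (G : SimpleGraph V) (R : Set V) (T : G.Subgraph)
    (hT : IsSteinerTree G R T) (v : V) (hv : v ∈ T.verts) (hvR : v ∉ R)
    (K : Set V) (hK : G.IsClique K) (hKT : K ⊆ T.verts) (hvK : v ∈ K) (hK2 : 2 ≤ K.ncard)
    (hKfin : K.Finite)
    (hnb : ∀ w, T.Adj v w → w ∈ K \ {v}) :
    (G.induce (T.verts \ {v})).Connected ∧ R ⊆ T.verts \ {v} ∧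
      ∃ T' : G.Subgraph, IsSteinerTree G R T' ∧ (T'.verts \ R).ncard < (T.verts \ R).ncard :=
  stmt14_general G R T hT v hv hvR K hK hKT hK2 hnb
end
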